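/- arXiv:1810.12861 — 2 statements merged into one kernel-verified Lean document; each statement's English description precedes it below -/
import Mathlib

section
/- Let N be a finite ground set, (N, 𝓜) a matroid, Z a monotone, submodular, normalized set function on N, and c ∈ [0,1] a curvature bound for Z. Let A, B ∈ 𝓜 and let (a_1, …, a_{|A|}) be any enumeration of A. Then Z(B) ≤ Σ_{i : a_i ∈ A ∩ B} ρ_{a_i}(A^{i−1}) + c·Σ_{i : a_i ∈ A ∖ B} ρ_{a_i}(A^{i−1}) + Σ_{b ∈ B ∖ A} ρ_b(A). -/
/-!
Let `Aᵏ` be the initial segments of the enumeration of `A`. Adding `A` to `B` one element at a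
time, the element `aᵢ ∉ B` raises `Z` by `ρ_{aᵢ}(B ∪ Aⁱ⁻¹) ≥ (1 - c) ρ_{aᵢ}(Aⁱ⁻¹)`, by
submodularity and the curvature bound, so `Z(B) + (1 - c) Σ_{aᵢ ∉ B} ρ_{aᵢ}(Aⁱ⁻¹) ≤ Z(A ∪ B)`.
By submodularity `Z(A ∪ B) ≤ Z(A) + Σ_{b ∈ B ∖ A} ρ_b(A)`, and `Z(A)` telescopes into
`Σᵢ ρ_{aᵢ}(Aⁱ⁻¹)`.
-/

open Finset

/-- Marginal gain of adding `q` to `S`: `ρ_q(S) = Z(S ∪ {q}) − Z(S)`. -/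
def marg {α : Type*} [DecidableEq α] (Z : Finset α → ℝ) (q : α) (S : Finset α) : ℝ :=
  Z (insert q S) - Z S

/-- The set `{g 1, …, g i}` of the first `i` elements of the sequence `g`. -/
def initSeg {α : Type*} [DecidableEq α] (g : ℕ → α) (i : ℕ) : Finset α :=
  (Finset.Icc 1 i).image g

section Curvature

variable {α : Type*} [DecidableEq α]

def IsMonotoneOn (N : Finset α) (Z : Finset α → ℝ) : Prop :=
  ∀ S T : Finset α, S ⊆ T → T ⊆ N → Z S ≤ Z T

def IsSubmodularOn (N : Finset α) (Z : Finset α → ℝ) : Prop :=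
  ∀ S T : Finset α, ∀ x, S ⊆ T → T ⊆ N → x ∈ N → x ∉ T →
    Z (insert x T) - Z T ≤ Z (insert x S) - Z S

def IsCurvatureBound (N : Finset α) (Z : Finset α → ℝ) (c : ℝ) : Prop :=
  ∀ S ⊆ N, ∀ j ∈ N, j ∉ S → 0 < marg Z j (∅ : Finset α) →
    (1 - c) * marg Z j (∅ : Finset α) ≤ marg Z j S

variable {N A B S T : Finset α} {Z : Finset α → ℝ} {c : ℝ} {q : α} {g : ℕ → α}

theorem marg_of_mem (hq : q ∈ S) : marg Z q S = 0 := by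
  simp [marg, insert_eq_of_mem hq]

theorem IsMonotoneOn.marg_nonneg (hZ : IsMonotoneOn N Z) (hq : q ∈ N) (hS : S ⊆ N) :
    0 ≤ marg Z q S :=
  sub_nonneg.2 (hZ _ _ (subset_insert q S) (insert_subset hq hS))

theorem IsSubmodularOn.marg_le_marg_of_subset (hsub : IsSubmodularOn N Z)
    (hmono : IsMonotoneOn N Z) (hST : S ⊆ T) (hT : T ⊆ N) (hq : q ∈ N) :
    marg Z q T ≤ marg Z q S := by
  by_cases hqT : q ∈ T
  · rw [marg_of_mem hqT]
    exact hmono.marg_nonneg hq (hST.trans hT)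
  · exact hsub S T q hST hT hq hqT

theorem IsCurvatureBound.one_sub_mul_marg_le (hcurv : IsCurvatureBound N Z c) (hc1 : c ≤ 1)
    (hsub : IsSubmodularOn N Z) (hmono : IsMonotoneOn N Z) (hq : q ∈ N) (hS : S ⊆ N)
    (hT : T ⊆ N) (hqT : q ∉ T) :
    (1 - c) * marg Z q S ≤ marg Z q T := by
  have hS_le : marg Z q S ≤ marg Z q ∅ :=
    hsub.marg_le_marg_of_subset hmono (empty_subset S) hS hq
  by_cases hpos : 0 < marg Z q ∅
  · calc (1 - c) * marg Z q S ≤ (1 - c) * marg Z q ∅ :=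
          mul_le_mul_of_nonneg_left hS_le (sub_nonneg.2 hc1)
      _ ≤ marg Z q T := hcurv T hT q hq hqT hpos
  · have hS_zero : marg Z q S = 0 :=
      le_antisymm (hS_le.trans (not_lt.1 hpos)) (hmono.marg_nonneg hq hS)
    rw [hS_zero, mul_zero]
    exact hmono.marg_nonneg hq hT

theorem IsSubmodularOn.le_add_sum_marg (hsub : IsSubmodularOn N Z) (hmono : IsMonotoneOn N Z)
    (hA : A ⊆ N) (hS : S ⊆ N) :
    Z (A ∪ S) ≤ Z A + ∑ b ∈ S, marg Z b A := by
  induction S using Finset.induction_on with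
  | empty => simp
  | insert x S hxS ih =>
    have hS' : S ⊆ N := (subset_insert x S).trans hS
    have hx : x ∈ N := hS (mem_insert_self x S)
    have hstep : marg Z x (A ∪ S) ≤ marg Z x A :=
      hsub.marg_le_marg_of_subset hmono subset_union_left (union_subset hA hS') hx
    have hmarg : marg Z x (A ∪ S) = Z (insert x (A ∪ S)) - Z (A ∪ S) := rfl
    rw [union_insert, sum_insert hxS]
    linarith [ih hS']

theorem initSeg_zero : initSeg g 0 = ∅ := rfl

theorem initSeg_succ (k : ℕ) : initSeg g (k + 1) = insert (g (k + 1)) (initSeg g k) := by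
  rw [initSeg, initSeg, ← insert_Icc_right_eq_Icc_add_one (Nat.le_add_left 1 k), image_insert]

theorem initSeg_mono : Monotone (initSeg g) :=
  fun _ _ hij => image_subset_image (Icc_subset_Icc_right hij)

theorem sum_sub_initSeg (F : Finset α → ℝ) (k : ℕ) :
    ∑ i ∈ Icc 1 k, (F (insert (g i) (initSeg g (i - 1))) - F (initSeg g (i - 1)))
      = F (initSeg g k) - F ∅ := by
  induction k with
  | zero => simp [initSeg_zero]
  | succ k ih =>
    rw [sum_Icc_succ_top (Nat.le_add_left 1 k), ih, Nat.add_sub_cancel, initSeg_succ]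
    ring

theorem sum_marg_initSeg (Z : Finset α → ℝ) (k : ℕ) :
    ∑ i ∈ Icc 1 k, marg Z (g i) (initSeg g (i - 1)) = Z (initSeg g k) - Z ∅ :=
  sum_sub_initSeg Z k

theorem IsCurvatureBound.add_one_sub_mul_sum_marg_le (hcurv : IsCurvatureBound N Z c)
    (hc1 : c ≤ 1) (hsub : IsSubmodularOn N Z) (hmono : IsMonotoneOn N Z) (hB : B ⊆ N) {k : ℕ}
    (hX : initSeg g k ⊆ N) :
    Z B + (1 - c) * ∑ i ∈ (Icc 1 k).filter (fun i => g i ∉ B),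
        marg Z (g i) (initSeg g (i - 1)) ≤ Z (B ∪ initSeg g k) := by
  have hseg : ∀ i ∈ Icc 1 k, g i ∈ N ∧ initSeg g (i - 1) ⊆ N := fun i hi =>
    ⟨hX (mem_image_of_mem g hi),
      (initSeg_mono ((Nat.sub_le i 1).trans (mem_Icc.1 hi).2)).trans hX⟩
  have hgain_nonneg : ∀ i ∈ Icc 1 k, 0 ≤ marg Z (g i) (B ∪ initSeg g (i - 1)) := fun i hi =>
    hmono.marg_nonneg (hseg i hi).1 (union_subset hB (hseg i hi).2)
  -- no injectivity of `g` is needed: a repeated element has zero marginal gain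
  have hgain_ge : ∀ i ∈ (Icc 1 k).filter (fun i => g i ∉ B),
      (1 - c) * marg Z (g i) (initSeg g (i - 1)) ≤ marg Z (g i) (B ∪ initSeg g (i - 1)) :=
    fun i hi => by
      obtain ⟨hi, hiB⟩ := mem_filter.1 hi
      obtain ⟨hgi, hsegN⟩ := hseg i hi
      by_cases hmem : g i ∈ initSeg g (i - 1)
      · rw [marg_of_mem hmem, mul_zero]
        exact hgain_nonneg i hi
      · exact hcurv.one_sub_mul_marg_le hc1 hsub hmono hgi hsegN (union_subset hB hsegN)
          (by simp [hiB, hmem])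
  have htel :
      ∑ i ∈ Icc 1 k, marg Z (g i) (B ∪ initSeg g (i - 1)) = Z (B ∪ initSeg g k) - Z B := by
    have := sum_sub_initSeg (g := g) (fun X => Z (B ∪ X)) k
    simp only [union_insert, union_empty] at this
    exact this
  calc Z B + (1 - c) * ∑ i ∈ (Icc 1 k).filter (fun i => g i ∉ B),
        marg Z (g i) (initSeg g (i - 1))
      ≤ Z B + ∑ i ∈ (Icc 1 k).filter (fun i => g i ∉ B),
          marg Z (g i) (B ∪ initSeg g (i - 1)) := by
        rw [mul_sum]
        gcongr with i hi
        exact hgain_ge i hi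
    _ ≤ Z B + ∑ i ∈ Icc 1 k, marg Z (g i) (B ∪ initSeg g (i - 1)) :=
        (add_le_add_iff_left _).2 <| sum_le_sum_of_subset_of_nonneg (filter_subset _ _)
          fun i hi _ => hgain_nonneg i hi
    _ = Z (B ∪ initSeg g k) := by rw [htel]; ring

end Curvature

theorem curvature_fundamental_bound_general {α : Type*} [DecidableEq α]
    (N : Finset α) (M : Finset α → Prop)
    (hM_ground : ∀ S, M S → S ⊆ N)
    (Z : Finset α → ℝ)
    (hZ_mono : ∀ S T : Finset α, S ⊆ T → T ⊆ N → Z S ≤ Z T)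
    (hZ_submod : ∀ S T : Finset α, ∀ x, S ⊆ T → T ⊆ N → x ∈ N → x ∉ T →
      Z (insert x T) - Z T ≤ Z (insert x S) - Z S)
    (hZ_empty : Z ∅ = 0)
    (c : ℝ) (hc1 : c ≤ 1)
    (hcurv : ∀ S ⊆ N, ∀ j ∈ N, j ∉ S → 0 < marg Z j (∅ : Finset α) →
      (1 - c) * marg Z j (∅ : Finset α) ≤ marg Z j S)
    (A B : Finset α) (hA_M : M A) (hB_M : M B)
    (m : ℕ)
    (a : ℕ → α)
    (ha_img : (Finset.Icc 1 m).image a = A) :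
    Z B ≤ (∑ i ∈ (Finset.Icc 1 m).filter fun i => a i ∈ B,
        marg Z (a i) (initSeg a (i - 1)))
      + c * (∑ i ∈ (Finset.Icc 1 m).filter fun i => a i ∉ B,
        marg Z (a i) (initSeg a (i - 1)))
      + ∑ b ∈ B \ A, marg Z b A := by
  have hA : A ⊆ N := hM_ground A hA_M
  have hB : B ⊆ N := hM_ground B hB_M
  have hseg : initSeg a m = A := ha_img
  have hgrow := IsCurvatureBound.add_one_sub_mul_sum_marg_le hcurv hc1 hZ_submod hZ_mono hB
    (hseg ▸ hA)
  have hunion := IsSubmodularOn.le_add_sum_marg hZ_submod hZ_mono hA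
    (S := B \ A) (sdiff_subset.trans hB)
  have htel := sum_marg_initSeg Z (g := a) m
  rw [← sum_filter_add_sum_filter_not _ (fun i => a i ∈ B), hseg] at htel
  rw [hseg, union_comm] at hgrow
  rw [union_sdiff_self_eq_union] at hunion
  linarith

/-- Curvature inequality (Conforti–Cornuéjols Lemma 2.1): for `A, B ∈ 𝓜`
and any enumeration of `A`,
`Z(B) ≤ Σ_{i : a_i ∈ A ∩ B} ρ_{a_i}(A^{i−1}) + c·Σ_{i : a_i ∈ A ∖ B} ρ_{a_i}(A^{i−1})
  + Σ_{b ∈ B ∖ A} ρ_b(A)`. -/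
theorem curvature_fundamental_bound {α : Type*} [DecidableEq α]
    (N : Finset α) (M : Finset α → Prop)
    (hM_ground : ∀ S, M S → S ⊆ N) (hM_empty : M ∅)
    (hM_down : ∀ S T : Finset α, M T → S ⊆ T → M S)
    (hM_aug : ∀ S T : Finset α, M S → M T → S.card < T.card → ∃ x ∈ T \ S, M (insert x S))
    (Z : Finset α → ℝ)
    (hZ_mono : ∀ S T : Finset α, S ⊆ T → T ⊆ N → Z S ≤ Z T)
    (hZ_submod : ∀ S T : Finset α, ∀ x, S ⊆ T → T ⊆ N → x ∈ N → x ∉ T →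
      Z (insert x T) - Z T ≤ Z (insert x S) - Z S)
    (hZ_empty : Z ∅ = 0)
    (c : ℝ) (hc0 : 0 ≤ c) (hc1 : c ≤ 1)
    (hcurv : ∀ S ⊆ N, ∀ j ∈ N, j ∉ S → 0 < marg Z j (∅ : Finset α) →
      (1 - c) * marg Z j (∅ : Finset α) ≤ marg Z j S)
    (A B : Finset α) (hA_M : M A) (hB_M : M B)
    (m : ℕ) (hm : A.card = m)
    (a : ℕ → α) (ha_inj : Set.InjOn a (Set.Icc 1 m))
    (ha_img : (Finset.Icc 1 m).image a = A) :
    Z B ≤ (∑ i ∈ (Finset.Icc 1 m).filter fun i => a i ∈ B,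
        marg Z (a i) (initSeg a (i - 1)))
      + c * (∑ i ∈ (Finset.Icc 1 m).filter fun i => a i ∉ B,
        marg Z (a i) (initSeg a (i - 1)))
      + ∑ b ∈ B \ A, marg Z b A :=
  curvature_fundamental_bound_general N M hM_ground Z hZ_mono hZ_submod hZ_empty c hc1 hcurv A B
    hA_M hB_M m a ha_img
end

section
/- Let N be a finite ground set, (N, 𝓜) a matroid of rank K, Z a monotone, submodular, normalized set function on N, and g a greedy sequence for (Z, 𝓜) with output G and partial outputs G^{i−1}. Suppose for some i ∈ {1, …, K} that the set G^{i−1}_⊥ = {x ∈ N ∖ G^{i−1} : G^{i−1} ∪ {x} ∈ 𝓜} has cardinality exactly K − i + 1. Then G = G^{i−1} ∪ G^{i−1}_⊥, and G^{i−1}_⊥ is contained in every basis of the matroid; in particular, g_j belongs to every basis for every j ≥ i. -/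
/-!
Every independent superset `T` of the independent set `P = G^{i-1}` adds only feasible
extensions of `P`, so `T \ P ⊆ P_⊥`; when `|T| = K` this is an inclusion of sets of the same
size `K - i + 1`, hence an equality. Taking `T = G` gives `G = P ∪ P_⊥`. For an arbitrary
basis `B`, augmenting `P` from `B` yields an independent `T ⊇ P` of size `K` with `T \ P ⊆ B`,
hence `P_⊥ = T \ P ⊆ B`.
-/

open Finset

lemma exists_superset_sdiff_subset_of_card_le {α : Type*} [DecidableEq α] {M : Finset α → Prop}
    (hM_aug : ∀ S T : Finset α, M S → M T → S.card < T.card →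
      ∃ x ∈ T \ S, M (insert x S))
    {S B : Finset α} (hS : M S) (hB : M B) (hSB : S.card ≤ B.card) :
    ∃ T, M T ∧ T.card = B.card ∧ S ⊆ T ∧ T \ S ⊆ B := by
  obtain ⟨n, hn⟩ := Nat.exists_eq_add_of_le hSB
  induction n generalizing S with
  | zero => exact ⟨S, hS, hn.symm, subset_rfl, by simp⟩
  | succ n ih =>
    obtain ⟨x, hx, hxS⟩ := hM_aug S B hS hB (by omega)
    obtain ⟨hxB, hxnS⟩ := mem_sdiff.mp hx
    have hxS_card : (insert x S).card = S.card + 1 := card_insert_of_notMem hxnS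
    obtain ⟨T, hT, hTB, hxST, hTxSB⟩ := ih hxS (by omega) (by omega)
    refine ⟨T, hT, hTB, (subset_insert x S).trans hxST, ?_⟩
    calc T \ S ⊆ insert x ((T \ S).erase x) := insert_erase_subset x _
      _ ⊆ B := insert_subset hxB (by rwa [← sdiff_insert])

section Extensions

variable {α : Type*} [DecidableEq α] (N : Finset α) (M : Finset α → Prop) [DecidablePred M]

/-- `P_⊥` in the paper's notation. -/
def extensions (P : Finset α) : Finset α :=
  (N \ P).filter fun x => M (insert x P)

variable {N M}

lemma sdiff_subset_extensions (hM_ground : ∀ S, M S → S ⊆ N)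
    (hM_down : ∀ S T : Finset α, M T → S ⊆ T → M S)
    {P T : Finset α} (hT : M T) (hPT : P ⊆ T) : T \ P ⊆ extensions N M P := by
  intro x hx
  obtain ⟨hxT, hxP⟩ := mem_sdiff.mp hx
  exact mem_filter.mpr ⟨mem_sdiff.mpr ⟨hM_ground T hT hxT, hxP⟩,
    hM_down _ T hT (insert_subset hxT hPT)⟩

lemma sdiff_eq_extensions_of_card_eq (hM_ground : ∀ S, M S → S ⊆ N)
    (hM_down : ∀ S T : Finset α, M T → S ⊆ T → M S)
    {P T : Finset α} (hT : M T) (hPT : P ⊆ T)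
    (hcard : T.card = P.card + (extensions N M P).card) : T \ P = extensions N M P :=
  eq_of_subset_of_card_le (sdiff_subset_extensions hM_ground hM_down hT hPT)
    (by rw [card_sdiff_of_subset hPT]; omega)

lemma eq_union_extensions_of_card_eq (hM_ground : ∀ S, M S → S ⊆ N)
    (hM_down : ∀ S T : Finset α, M T → S ⊆ T → M S)
    {P T : Finset α} (hT : M T) (hPT : P ⊆ T)
    (hcard : T.card = P.card + (extensions N M P).card) : T = P ∪ extensions N M P := by
  rw [← sdiff_eq_extensions_of_card_eq hM_ground hM_down hT hPT hcard,
    union_sdiff_of_subset hPT]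

lemma extensions_subset_of_card_eq (hM_ground : ∀ S, M S → S ⊆ N)
    (hM_down : ∀ S T : Finset α, M T → S ⊆ T → M S)
    (hM_aug : ∀ S T : Finset α, M S → M T → S.card < T.card →
      ∃ x ∈ T \ S, M (insert x S))
    {P B : Finset α} (hP : M P) (hB : M B)
    (hcard : B.card = P.card + (extensions N M P).card) : extensions N M P ⊆ B := by
  obtain ⟨T, hT, hTB, hPT, hTPB⟩ :=
    exists_superset_sdiff_subset_of_card_le hM_aug hP hB (by omega)
  rw [← sdiff_eq_extensions_of_card_eq hM_ground hM_down hT hPT (by omega)]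
  exact hTPB

end Extensions

section InitSeg

variable {α : Type*} [DecidableEq α] (g : ℕ → α)

lemma initSeg_mono_s16 {i j : ℕ} (hij : i ≤ j) : initSeg g i ⊆ initSeg g j :=
  image_subset_image (Icc_subset_Icc_right hij)

variable {g} {K : ℕ}

lemma card_initSeg (hg : Set.InjOn g (Set.Icc 1 K)) {i : ℕ} (hi : i ≤ K) :
    (initSeg g i).card = i := by
  rw [initSeg, card_image_of_injOn, Nat.card_Icc, Nat.add_sub_cancel]
  simpa only [coe_Icc] using hg.mono (Set.Icc_subset_Icc_right hi)

lemma apply_mem_initSeg {i j : ℕ} (hj : 1 ≤ j) (hji : j ≤ i) : g j ∈ initSeg g i :=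
  mem_image_of_mem g (mem_Icc.mpr ⟨hj, hji⟩)

lemma apply_notMem_initSeg (hg : Set.InjOn g (Set.Icc 1 K)) {i j : ℕ} (hij : i < j)
    (hjK : j ≤ K) : g j ∉ initSeg g i := by
  simp only [initSeg, mem_image, mem_Icc, not_exists, not_and, and_imp]
  intro m hm hmi hmj
  have := hg ⟨hm, by omega⟩ ⟨by omega, hjK⟩ hmj
  omega

end InitSeg

theorem greedy_tail_in_every_basis_general {α : Type*} [DecidableEq α]
    (N : Finset α) (M : Finset α → Prop)
    (hM_ground : ∀ S, M S → S ⊆ N)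
    (hM_down : ∀ S T : Finset α, M T → S ⊆ T → M S)
    (hM_aug : ∀ S T : Finset α, M S → M T → S.card < T.card → ∃ x ∈ T \ S, M (insert x S))
    [DecidablePred M]
    (K : ℕ)
    (g : ℕ → α) (hg_inj : Set.InjOn g (Set.Icc 1 K)) (hG_M : M (initSeg g K))
    (i : ℕ) (hi : i ∈ Finset.Icc 1 K)
    (hcard : ((N \ initSeg g (i - 1)).filter
      fun x => M (insert x (initSeg g (i - 1)))).card = K - i + 1) :
    initSeg g K = initSeg g (i - 1) ∪ ((N \ initSeg g (i - 1)).filter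
        fun x => M (insert x (initSeg g (i - 1)))) ∧
    (∀ B : Finset α, M B → B.card = K →
      ((N \ initSeg g (i - 1)).filter
        fun x => M (insert x (initSeg g (i - 1)))) ⊆ B) ∧
    (∀ j, i ≤ j → j ≤ K → ∀ B : Finset α, M B → B.card = K → g j ∈ B) := by
  obtain ⟨hi1, hiK⟩ := mem_Icc.mp hi
  set P := initSeg g (i - 1)
  change (extensions N M P).card = K - i + 1 at hcard
  have hPG : P ⊆ initSeg g K := initSeg_mono_s16 g (by omega)
  have hP : M P := hM_down P _ hG_M hPG
  have hcardP : P.card + (extensions N M P).card = K := by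
    rw [card_initSeg hg_inj (by omega), hcard]
    omega
  have hbasis (B : Finset α) (hB : M B) (hBK : B.card = K) : extensions N M P ⊆ B :=
    extensions_subset_of_card_eq hM_ground hM_down hM_aug hP hB (by omega)
  refine ⟨eq_union_extensions_of_card_eq hM_ground hM_down hG_M hPG
    (by rw [card_initSeg hg_inj le_rfl, hcardP]), hbasis, fun j hij hjK B hB hBK => ?_⟩
  refine hbasis B hB hBK (sdiff_subset_extensions hM_ground hM_down hG_M hPG ?_)
  exact mem_sdiff.mpr
    ⟨apply_mem_initSeg (by omega) hjK, apply_notMem_initSeg hg_inj (by omega) hjK⟩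

/-- If at iteration `i` the feasible extension set
`G^{i−1}_⊥ = {x ∈ N ∖ G^{i−1} : G^{i−1} ∪ {x} ∈ 𝓜}` has exactly `K − i + 1` elements, then
`G = G^{i−1} ∪ G^{i−1}_⊥`, `G^{i−1}_⊥` is contained in every basis, and in particular
`g j` belongs to every basis for every `j ≥ i`. -/
theorem greedy_tail_in_every_basis {α : Type*} [DecidableEq α]
    (N : Finset α) (M : Finset α → Prop)
    (hM_ground : ∀ S, M S → S ⊆ N) (hM_empty : M ∅)
    (hM_down : ∀ S T : Finset α, M T → S ⊆ T → M S)
    (hM_aug : ∀ S T : Finset α, M S → M T → S.card < T.card → ∃ x ∈ T \ S, M (insert x S))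
    [DecidablePred M]
    (K : ℕ) (hK_le : ∀ S, M S → S.card ≤ K) (hK_ex : ∃ B, M B ∧ B.card = K)
    (Z : Finset α → ℝ)
    (hZ_mono : ∀ S T : Finset α, S ⊆ T → T ⊆ N → Z S ≤ Z T)
    (hZ_submod : ∀ S T : Finset α, ∀ x, S ⊆ T → T ⊆ N → x ∈ N → x ∉ T →
      Z (insert x T) - Z T ≤ Z (insert x S) - Z S)
    (hZ_empty : Z ∅ = 0)
    (g : ℕ → α) (hg_inj : Set.InjOn g (Set.Icc 1 K)) (hG_M : M (initSeg g K))
    (hg_max : ∀ i ∈ Finset.Icc 1 K, ∀ x ∈ N, x ∉ initSeg g (i - 1) →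
      M (insert x (initSeg g (i - 1))) →
      marg Z x (initSeg g (i - 1)) ≤ marg Z (g i) (initSeg g (i - 1)))
    (i : ℕ) (hi : i ∈ Finset.Icc 1 K)
    (hcard : ((N \ initSeg g (i - 1)).filter
      fun x => M (insert x (initSeg g (i - 1)))).card = K - i + 1) :
    initSeg g K = initSeg g (i - 1) ∪ ((N \ initSeg g (i - 1)).filter
        fun x => M (insert x (initSeg g (i - 1)))) ∧
    (∀ B : Finset α, M B → B.card = K →
      ((N \ initSeg g (i - 1)).filter
        fun x => M (insert x (initSeg g (i - 1)))) ⊆ B) ∧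
    (∀ j, i ≤ j → j ≤ K → ∀ B : Finset α, M B → B.card = K → g j ∈ B) :=
  greedy_tail_in_every_basis_general N M hM_ground hM_down hM_aug K g hg_inj hG_M i hi hcard
end
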